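/- For every k ∈ {0, 1, 2, 3, 4} and every natural number n with n ≥ k, the fibonomial coefficients satisfy C(n+5, k)_F ≡ 3^k · C(n, k)_F (mod 5). -/
import Mathlib


/-- The fibotorial `n!_F = F_n · F_{n-1} ⋯ F_1`, with `0!_F = 1`. -/
def fibotorial (n : ℕ) : ℕ := ∏ i ∈ Finset.range n, Nat.fib (i + 1)

/-- The fibonomial coefficient `C(n,k)_F = n!_F / (k!_F · (n-k)!_F)` for `k ≤ n`,
and `0` otherwise. -/
def fibnomial (n k : ℕ) : ℕ :=
  if k ≤ n then fibotorial n / (fibotorial k * fibotorial (n - k)) else 0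

lemma fibotorial_succ (n : ℕ) : fibotorial (n + 1) = Nat.fib (n + 1) * fibotorial n := by
  rw [fibotorial, Finset.prod_range_succ, mul_comm, fibotorial]

lemma fibotorial_pos (n : ℕ) : 0 < fibotorial n :=
  Finset.prod_pos fun i _ => Nat.fib_pos.2 (Nat.succ_pos i)

lemma fib_add_five (n : ℕ) : Nat.fib (n + 5) ≡ 3 * Nat.fib n [MOD 5] := by
  have h := Nat.fib_add n 4
  norm_num at h
  show Nat.fib (n + 5) % 5 = (3 * Nat.fib n) % 5
  rw [show n + 5 = n + 4 + 1 by ring, h, mul_comm (Nat.fib n) 3]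
  omega

lemma fibnomial_one (m : ℕ) : fibnomial (m + 1) 1 = Nat.fib (m + 1) := by
  rw [fibnomial, if_pos (by omega), fibotorial_succ]
  simp [fibotorial, Nat.mul_div_cancel _ (fibotorial_pos m)]

lemma fibnomial_two (m : ℕ) :
    fibnomial (m + 2) 2 = Nat.fib (m + 2) * Nat.fib (m + 1) := by
  rw [fibnomial, if_pos (by omega), fibotorial_succ, fibotorial_succ]
  have h2 : fibotorial 2 = 1 := by decide
  have e : m + 2 - 2 = m := by omega
  have key : Nat.fib (m + 1 + 1) * (Nat.fib (m + 1) * fibotorial m)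
      = (Nat.fib (m + 2) * Nat.fib (m + 1)) * fibotorial m := by ring_nf
  rw [e, h2, one_mul, key, Nat.mul_div_cancel _ (fibotorial_pos m)]

lemma dvd_two (m : ℕ) : 2 ∣ Nat.fib (m + 3) * Nat.fib (m + 2) * Nat.fib (m + 1) := by
  have h : 3 ∣ (m + 1) ∨ 3 ∣ (m + 2) ∨ 3 ∣ (m + 3) := by omega
  have f3 : Nat.fib 3 = 2 := by decide
  rcases h with h | h | h
  · exact dvd_mul_of_dvd_right (f3 ▸ Nat.fib_dvd 3 _ h) _
  · exact dvd_mul_of_dvd_left (dvd_mul_of_dvd_right (f3 ▸ Nat.fib_dvd 3 _ h) _) _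
  · exact dvd_mul_of_dvd_left (dvd_mul_of_dvd_left (f3 ▸ Nat.fib_dvd 3 _ h) _) _

lemma dvd_three (m : ℕ) :
    3 ∣ Nat.fib (m + 4) * (Nat.fib (m + 3) * Nat.fib (m + 2) * Nat.fib (m + 1)) := by
  have h : 4 ∣ (m + 1) ∨ 4 ∣ (m + 2) ∨ 4 ∣ (m + 3) ∨ 4 ∣ (m + 4) := by omega
  have f4 : Nat.fib 4 = 3 := by decide
  rcases h with h | h | h | h
  · exact dvd_mul_of_dvd_right (dvd_mul_of_dvd_right (f4 ▸ Nat.fib_dvd 4 _ h) _) _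
  · exact dvd_mul_of_dvd_right (dvd_mul_of_dvd_left (dvd_mul_of_dvd_right (f4 ▸ Nat.fib_dvd 4 _ h) _) _) _
  · exact dvd_mul_of_dvd_right (dvd_mul_of_dvd_left (dvd_mul_of_dvd_left (f4 ▸ Nat.fib_dvd 4 _ h) _) _) _
  · exact dvd_mul_of_dvd_left (f4 ▸ Nat.fib_dvd 4 _ h) _

lemma dvd_six (m : ℕ) :
    6 ∣ Nat.fib (m + 4) * Nat.fib (m + 3) * Nat.fib (m + 2) * Nat.fib (m + 1) := by
  have h2 : 2 ∣ Nat.fib (m + 4) * Nat.fib (m + 3) * Nat.fib (m + 2) * Nat.fib (m + 1) := by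
    have := dvd_two m
    have e : Nat.fib (m + 4) * Nat.fib (m + 3) * Nat.fib (m + 2) * Nat.fib (m + 1)
        = Nat.fib (m + 4) * (Nat.fib (m + 3) * Nat.fib (m + 2) * Nat.fib (m + 1)) := by ring
    rw [e]
    exact dvd_mul_of_dvd_right this _
  have h3 := dvd_three m
  have e : Nat.fib (m + 4) * Nat.fib (m + 3) * Nat.fib (m + 2) * Nat.fib (m + 1)
      = Nat.fib (m + 4) * (Nat.fib (m + 3) * Nat.fib (m + 2) * Nat.fib (m + 1)) := by ring
  have : (2 * 3 : ℕ) ∣ _ := Nat.Coprime.mul_dvd_of_dvd_of_dvd (by decide) h2 (e ▸ h3)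
  simpa using this

lemma fibnomial_three (m : ℕ) :
    2 * fibnomial (m + 3) 3 = Nat.fib (m + 3) * Nat.fib (m + 2) * Nat.fib (m + 1) := by
  rw [fibnomial, if_pos (by omega), fibotorial_succ, fibotorial_succ, fibotorial_succ]
  have h3 : fibotorial 3 = 2 := by decide
  have e : m + 3 - 3 = m := by omega
  have key : Nat.fib (m + 2 + 1) * (Nat.fib (m + 1 + 1) * (Nat.fib (m + 1) * fibotorial m))
      = (Nat.fib (m + 3) * Nat.fib (m + 2) * Nat.fib (m + 1)) * fibotorial m := by ring_nf
  rw [e, h3, key, Nat.mul_div_mul_right _ _ (fibotorial_pos m)]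
  exact Nat.mul_div_cancel' (dvd_two m)

lemma fibnomial_four (m : ℕ) :
    6 * fibnomial (m + 4) 4 =
      Nat.fib (m + 4) * Nat.fib (m + 3) * Nat.fib (m + 2) * Nat.fib (m + 1) := by
  rw [fibnomial, if_pos (by omega), fibotorial_succ, fibotorial_succ, fibotorial_succ,
    fibotorial_succ]
  have h4 : fibotorial 4 = 6 := by decide
  have e : m + 4 - 4 = m := by omega
  rw [e, h4]
  have e2 : Nat.fib (m + 4) * (Nat.fib (m + 3) * (Nat.fib (m + 2) * (Nat.fib (m + 1) * fibotorial m)))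
      = (Nat.fib (m + 4) * Nat.fib (m + 3) * Nat.fib (m + 2) * Nat.fib (m + 1)) * fibotorial m := by
    ring
  rw [e2, Nat.mul_div_mul_right _ _ (fibotorial_pos m)]
  exact Nat.mul_div_cancel' (dvd_six m)

theorem fibnomial_add_five_mod_five (k : ℕ) (hk : k ≤ 4) (n : ℕ) (hn : k ≤ n) :
    fibnomial (n + 5) k ≡ 3 ^ k * fibnomial n k [MOD 5] := by
  interval_cases k
  · -- k = 0
    have h0 : ∀ j, fibnomial j 0 = 1 := fun j => by
      rw [fibnomial, if_pos (Nat.zero_le _)]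
      simp [show fibotorial 0 = 1 from rfl, Nat.div_self (fibotorial_pos j)]
    rw [h0, h0]
    simp [Nat.ModEq]
  · -- k = 1
    obtain ⟨m, rfl⟩ : ∃ m, n = m + 1 := ⟨n - 1, by omega⟩
    rw [show m + 1 + 5 = (m + 5) + 1 by ring, fibnomial_one, fibnomial_one, pow_one]
    exact fib_add_five (m + 1)
  · -- k = 2
    obtain ⟨m, rfl⟩ : ∃ m, n = m + 2 := ⟨n - 2, by omega⟩
    rw [show m + 2 + 5 = (m + 5) + 2 by ring, fibnomial_two, fibnomial_two]
    have h1 := fib_add_five (m + 2)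
    have h2 := fib_add_five (m + 1)
    calc Nat.fib (m + 5 + 2) * Nat.fib (m + 5 + 1)
        ≡ (3 * Nat.fib (m + 2)) * (3 * Nat.fib (m + 1)) [MOD 5] := by
          exact Nat.ModEq.mul (by rw [show m + 5 + 2 = m + 2 + 5 by ring]; exact h1)
            (by rw [show m + 5 + 1 = m + 1 + 5 by ring]; exact h2)
      _ = 3 ^ 2 * (Nat.fib (m + 2) * Nat.fib (m + 1)) := by ring
  · -- k = 3
    obtain ⟨m, rfl⟩ : ∃ m, n = m + 3 := ⟨n - 3, by omega⟩
    apply Nat.ModEq.cancel_left_of_coprime (c := 2) (by decide)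
    rw [show m + 3 + 5 = (m + 5) + 3 by ring, fibnomial_three,
      show (2 : ℕ) * (3 ^ 3 * fibnomial (m + 3) 3) = 3 ^ 3 * (2 * fibnomial (m + 3) 3) by ring,
      fibnomial_three]
    calc Nat.fib (m + 5 + 3) * Nat.fib (m + 5 + 2) * Nat.fib (m + 5 + 1)
        ≡ (3 * Nat.fib (m + 3)) * (3 * Nat.fib (m + 2)) * (3 * Nat.fib (m + 1)) [MOD 5] := by
          refine Nat.ModEq.mul (Nat.ModEq.mul ?_ ?_) ?_
          · rw [show m + 5 + 3 = m + 3 + 5 by ring]; exact fib_add_five (m + 3)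
          · rw [show m + 5 + 2 = m + 2 + 5 by ring]; exact fib_add_five (m + 2)
          · rw [show m + 5 + 1 = m + 1 + 5 by ring]; exact fib_add_five (m + 1)
      _ = 3 ^ 3 * (Nat.fib (m + 3) * Nat.fib (m + 2) * Nat.fib (m + 1)) := by ring
  · -- k = 4
    obtain ⟨m, rfl⟩ : ∃ m, n = m + 4 := ⟨n - 4, by omega⟩
    apply Nat.ModEq.cancel_left_of_coprime (c := 6) (by decide)
    rw [show m + 4 + 5 = (m + 5) + 4 by ring, fibnomial_four,
      show (6 : ℕ) * (3 ^ 4 * fibnomial (m + 4) 4) = 3 ^ 4 * (6 * fibnomial (m + 4) 4) by ring,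
      fibnomial_four]
    calc Nat.fib (m + 5 + 4) * Nat.fib (m + 5 + 3) * Nat.fib (m + 5 + 2) * Nat.fib (m + 5 + 1)
        ≡ (3 * Nat.fib (m + 4)) * (3 * Nat.fib (m + 3)) * (3 * Nat.fib (m + 2)) *
            (3 * Nat.fib (m + 1)) [MOD 5] := by
          refine Nat.ModEq.mul (Nat.ModEq.mul (Nat.ModEq.mul ?_ ?_) ?_) ?_
          · rw [show m + 5 + 4 = m + 4 + 5 by ring]; exact fib_add_five (m + 4)
          · rw [show m + 5 + 3 = m + 3 + 5 by ring]; exact fib_add_five (m + 3)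
          · rw [show m + 5 + 2 = m + 2 + 5 by ring]; exact fib_add_five (m + 2)
          · rw [show m + 5 + 1 = m + 1 + 5 by ring]; exact fib_add_five (m + 1)
      _ = 3 ^ 4 * (Nat.fib (m + 4) * Nat.fib (m + 3) * Nat.fib (m + 2) * Nat.fib (m + 1)) := by
          ring
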